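/- For every ordered partition π of [n] into k blocks: cinvLSB(π) = (lsb + rsb)(O ∪ S)(π) + lsb(T ∪ C)(π) + inv(π) + 2·cinv(π), where cinvLSB = lsb + cbInv + binom(k,2) and cbInv = binom(k,2) − bInv. -/

import Mathlib

open Finset

/-- `B` is an ordered partition of `[n]` into `k` (nonempty, pairwise disjoint, covering)
blocks. -/
def isOP (n k : ℕ) (B : Fin k → Finset (Fin n)) : Prop :=
  (∀ j, (B j).Nonempty) ∧ (∀ j₁ j₂, j₁ ≠ j₂ → Disjoint (B j₁) (B j₂)) ∧ ∀ x, ∃ j, x ∈ B j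

/-- The type of ordered partitions of `[n]` into `k` blocks. -/
def OP (n k : ℕ) := {B : Fin k → Finset (Fin n) // isOP n k B}

namespace OP

variable {n k : ℕ}

/-- The opener (least element) of the `j`-th block. -/
def opener (π : OP n k) (j : Fin k) : Fin n := (π.1 j).min' (π.2.1 j)

/-- The closer (greatest element) of the `j`-th block. -/
def closer (π : OP n k) (j : Fin k) : Fin n := (π.1 j).max' (π.2.1 j)

/-- The index of the block containing `i`. -/
noncomputable def blk (π : OP n k) (i : Fin n) : Fin k := (π.2.2.2 i).choose

/-- `ros_i`: openers smaller than `i` in blocks to the right of `i`'s block. -/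
noncomputable def ros (π : OP n k) (i : Fin n) : ℕ :=
  (univ.filter fun j => π.blk i < j ∧ π.opener j < i).card

/-- `rob_i`: openers bigger than `i` in blocks to the right of `i`'s block. -/
noncomputable def rob (π : OP n k) (i : Fin n) : ℕ :=
  (univ.filter fun j => π.blk i < j ∧ i < π.opener j).card

/-- `rcs_i`: closers smaller than `i` in blocks to the right of `i`'s block. -/
noncomputable def rcs (π : OP n k) (i : Fin n) : ℕ :=
  (univ.filter fun j => π.blk i < j ∧ π.closer j < i).card

/-- `rcb_i`: closers bigger than `i` in blocks to the right of `i`'s block. -/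
noncomputable def rcb (π : OP n k) (i : Fin n) : ℕ :=
  (univ.filter fun j => π.blk i < j ∧ i < π.closer j).card

/-- `los_i`: openers smaller than `i` in blocks to the left of `i`'s block. -/
noncomputable def los (π : OP n k) (i : Fin n) : ℕ :=
  (univ.filter fun j => j < π.blk i ∧ π.opener j < i).card

/-- `lob_i`: openers bigger than `i` in blocks to the left of `i`'s block. -/
noncomputable def lob (π : OP n k) (i : Fin n) : ℕ :=
  (univ.filter fun j => j < π.blk i ∧ i < π.opener j).card

/-- `lcs_i`: closers smaller than `i` in blocks to the left of `i`'s block. -/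
noncomputable def lcs (π : OP n k) (i : Fin n) : ℕ :=
  (univ.filter fun j => j < π.blk i ∧ π.closer j < i).card

/-- `lcb_i`: closers bigger than `i` in blocks to the left of `i`'s block. -/
noncomputable def lcb (π : OP n k) (i : Fin n) : ℕ :=
  (univ.filter fun j => j < π.blk i ∧ i < π.closer j).card

/-- `rsb_i`: blocks to the right of `i`'s block with opener smaller and closer bigger
than `i`. -/
noncomputable def rsb (π : OP n k) (i : Fin n) : ℕ :=
  (univ.filter fun j => π.blk i < j ∧ π.opener j < i ∧ i < π.closer j).card

/-- `lsb_i`: blocks to the left of `i`'s block with opener smaller and closer bigger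
than `i`. -/
noncomputable def lsb (π : OP n k) (i : Fin n) : ℕ :=
  (univ.filter fun j => j < π.blk i ∧ π.opener j < i ∧ i < π.closer j).card

noncomputable def ROS (π : OP n k) : ℕ := ∑ i, π.ros i
noncomputable def ROB (π : OP n k) : ℕ := ∑ i, π.rob i
noncomputable def RCS (π : OP n k) : ℕ := ∑ i, π.rcs i
noncomputable def RCB (π : OP n k) : ℕ := ∑ i, π.rcb i
noncomputable def LOS (π : OP n k) : ℕ := ∑ i, π.los i
noncomputable def LOB (π : OP n k) : ℕ := ∑ i, π.lob i
noncomputable def LCS (π : OP n k) : ℕ := ∑ i, π.lcs i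
noncomputable def LCB (π : OP n k) : ℕ := ∑ i, π.lcb i
noncomputable def RSB (π : OP n k) : ℕ := ∑ i, π.rsb i
noncomputable def LSB (π : OP n k) : ℕ := ∑ i, π.lsb i

/-- The set of strict openers of `π`. -/
noncomputable def Oset (π : OP n k) : Finset (Fin n) :=
  univ.filter fun i => π.opener (π.blk i) = i ∧ 2 ≤ (π.1 (π.blk i)).card

/-- The set of singletons of `π`. -/
noncomputable def Sset (π : OP n k) : Finset (Fin n) :=
  univ.filter fun i => (π.1 (π.blk i)).card = 1

/-- The set of transients of `π`. -/
noncomputable def Tset (π : OP n k) : Finset (Fin n) :=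
  univ.filter fun i => π.opener (π.blk i) ≠ i ∧ π.closer (π.blk i) ≠ i

/-- The set of strict closers of `π`. -/
noncomputable def Cset (π : OP n k) : Finset (Fin n) :=
  univ.filter fun i => π.closer (π.blk i) = i ∧ 2 ≤ (π.1 (π.blk i)).card

/-- `inv π`: inversions of the permutation of `[k]` induced by the block ordering,
i.e. pairs of positions `j₁ < j₂` whose blocks have decreasing minima. -/
def inv (π : OP n k) : ℕ :=
  (univ.filter fun p : Fin k × Fin k => p.1 < p.2 ∧ π.opener p.2 < π.opener p.1).card

/-- `cinv π = C(k,2) - inv π`. -/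
def cinv (π : OP n k) : ℕ := k.choose 2 - π.inv

/-- `bInv π`: block inversions, i.e. pairs of positions `j₁ < j₂` with every element of
the `j₁`-st block greater than every element of the `j₂`-nd block. -/
def bInv (π : OP n k) : ℕ :=
  (univ.filter fun p : Fin k × Fin k => p.1 < p.2 ∧ π.closer p.2 < π.opener p.1).card

end OP

/-! Counting block pairs by the opener of the left block gives `inv = ros(O ∪ S)` and
`bInv = rcs(O ∪ S)`. A block to the right of `i`'s block whose opener is below `i` has its closer
either below `i` or above it, so `ros = rcs + rsb` and `inv = bInv + rsb(O ∪ S)`. Splitting `lsb`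
over `O ∪ S` and its complement `T ∪ C`, the identity becomes arithmetic, in which `bInv ≤ inv ≤ C(k,2)`
makes the truncated subtractions exact. -/

theorem Finset.card_filter_univ_prod {α β : Type*} [Fintype α] [Fintype β]
    (p : α × β → Prop) [DecidablePred p] :
    #{x | p x} = ∑ a, #{b | p (a, b)} := by
  simp only [card_filter, Fintype.sum_prod_type]

namespace OP

variable {n k : ℕ} (π : OP n k)

lemma mem_blk (i : Fin n) : i ∈ π.1 (π.blk i) := (π.2.2.2 i).choose_spec

lemma blk_eq_of_mem {i : Fin n} {j : Fin k} (h : i ∈ π.1 j) : π.blk i = j := by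
  by_contra hne
  exact disjoint_left.mp (π.2.2.1 _ _ hne) (π.mem_blk i) h

lemma opener_mem (j : Fin k) : π.opener j ∈ π.1 j := min'_mem _ _

lemma closer_mem (j : Fin k) : π.closer j ∈ π.1 j := max'_mem _ _

lemma opener_le_closer (j : Fin k) : π.opener j ≤ π.closer j := min'_le _ _ (π.closer_mem j)

lemma blk_opener (j : Fin k) : π.blk (π.opener j) = j := π.blk_eq_of_mem (π.opener_mem j)

lemma blk_closer (j : Fin k) : π.blk (π.closer j) = j := π.blk_eq_of_mem (π.closer_mem j)

lemma opener_injective : Function.Injective π.opener := fun a b h => by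
  rw [← π.blk_opener a, h, π.blk_opener]

def openers : Finset (Fin n) := univ.image π.opener

lemma mem_openers {i : Fin n} : i ∈ π.openers ↔ π.opener (π.blk i) = i := by
  refine ⟨fun h => ?_, fun h => mem_image.mpr ⟨_, mem_univ _, h⟩⟩
  obtain ⟨j, -, rfl⟩ := mem_image.mp h
  rw [π.blk_opener]

lemma sum_openers {M : Type*} [AddCommMonoid M] (f : Fin n → M) :
    ∑ i ∈ π.openers, f i = ∑ j, f (π.opener j) :=
  sum_image fun _ _ _ _ h => π.opener_injective h

lemma Oset_union_Sset : π.Oset ∪ π.Sset = π.openers := by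
  ext i
  simp only [Oset, Sset, mem_union, mem_filter, mem_univ, true_and, mem_openers]
  constructor
  · rintro (⟨h, -⟩ | h)
    · exact h
    · exact card_le_one.mp h.le _ (π.opener_mem _) _ (π.mem_blk i)
  · intro h
    have := card_pos.mpr (π.2.1 (π.blk i))
    by_cases hc : 2 ≤ #(π.1 (π.blk i))
    · exact Or.inl ⟨h, hc⟩
    · exact Or.inr (by omega)

lemma Tset_union_Cset : π.Tset ∪ π.Cset = π.openersᶜ := by
  ext i
  simp only [Tset, Cset, mem_union, mem_filter, mem_univ, true_and, mem_compl, mem_openers]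
  constructor
  · rintro (⟨h, -⟩ | ⟨h, hc⟩)
    · exact h
    · exact fun ho => (min'_lt_max'_of_card _ hc).ne (ho.trans h.symm)
  · intro h
    have hc : 2 ≤ #(π.1 (π.blk i)) := one_lt_card.mpr ⟨_, π.opener_mem _, _, π.mem_blk i, h⟩
    by_cases hcl : π.closer (π.blk i) = i
    · exact Or.inr ⟨hcl, hc⟩
    · exact Or.inl ⟨h, hcl⟩

lemma ros_eq_rcs_add_rsb (i : Fin n) : π.ros i = π.rcs i + π.rsb i := by
  rw [ros, rcs, rsb, ← card_union_of_disjoint]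
  · congr 1
    ext j
    simp only [mem_union, mem_filter, mem_univ, true_and]
    have hle := π.opener_le_closer j
    have hne : π.blk i < j → π.closer j ≠ i := fun h hc => h.ne (hc ▸ π.blk_closer j)
    constructor
    · rintro ⟨hb, ho⟩
      rcases lt_or_gt_of_ne (hne hb) with hc | hc
      · exact Or.inl ⟨hb, hc⟩
      · exact Or.inr ⟨hb, ho, hc⟩
    · rintro (⟨hb, hc⟩ | ⟨hb, ho, -⟩)
      · exact ⟨hb, hle.trans_lt hc⟩
      · exact ⟨hb, ho⟩
  · exact disjoint_filter.mpr fun _ _ h₁ h₂ => h₁.2.asymm h₂.2.2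

lemma inv_eq_sum_ros : π.inv = ∑ i ∈ π.openers, π.ros i := by
  simp only [inv, ros, sum_openers, blk_opener, card_filter_univ_prod]

lemma bInv_eq_sum_rcs : π.bInv = ∑ i ∈ π.openers, π.rcs i := by
  simp only [bInv, rcs, sum_openers, blk_opener, card_filter_univ_prod]

lemma bInv_add_sum_rsb : π.bInv + ∑ i ∈ π.openers, π.rsb i = π.inv := by
  simp only [bInv_eq_sum_rcs, inv_eq_sum_ros, ros_eq_rcs_add_rsb, sum_add_distrib]

lemma inv_le_choose_two : π.inv ≤ k.choose 2 := by
  calc π.inv ≤ #{p : Fin k × Fin k | p.1 < p.2} :=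
        card_le_card fun _ hp => mem_filter.mpr ⟨mem_univ _, (mem_filter.mp hp).2.1⟩
    _ = k.choose 2 := by rw [Fintype.card_product_filter_lt, Fintype.card_fin]

end OP

/-- `cinvLSB(π) = (lsb + rsb)(O ∪ S)(π) + lsb(T ∪ C)(π) + inv(π) + 2 cinv(π)`, where
`cinvLSB = lsb + cbInv + C(k,2)` and `cbInv = C(k,2) - bInv`. -/
theorem stmt8 {n k : ℕ} (π : OP n k) :
    π.LSB + (k.choose 2 - π.bInv) + k.choose 2 =
      (∑ i ∈ π.Oset ∪ π.Sset, (π.lsb i + π.rsb i)) +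
        (∑ i ∈ π.Tset ∪ π.Cset, π.lsb i) + π.inv + 2 * π.cinv := by
  have hinv := π.bInv_add_sum_rsb
  have hLSB : π.LSB = ∑ i ∈ π.openers, π.lsb i + ∑ i ∈ π.openersᶜ, π.lsb i :=
    (sum_add_sum_compl _ _).symm
  have hle := π.inv_le_choose_two
  rw [π.Oset_union_Sset, π.Tset_union_Cset, sum_add_distrib, OP.cinv]
  omega
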